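/- arXiv:math/0210149 — 2 statements merged into one kernel-verified Lean document; each statement's English description precedes it below -/
import Mathlib

section
/- Let K be an algebraically closed field of characteristic zero, V a finite-dimensional K-vector space, and 𝔤 a Lie subalgebra of gl(V) acting irreducibly on V. If 𝔥 is an abelian Lie-algebra ideal of 𝔤, then every element of 𝔥 acts on V as a scalar multiple of the identity. -/
open Module LinearMap

attribute [local instance] LieRing.ofAssociativeRing LieAlgebra.ofAssociativeAlgebra

/-- A finite commuting family of nilpotent endomorphisms of a nontrivial space has a
common nonzero kernel vector. -/
lemma aux_common_kernel {K V : Type*} [Field K] [AddCommGroup V] [Module K V] [Nontrivial V]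
    (l : List (Module.End K V)) (hcomm : ∀ a ∈ l, ∀ b ∈ l, Commute a b)
    (hnil : ∀ a ∈ l, IsNilpotent a) :
    ∃ v : V, v ≠ 0 ∧ ∀ a ∈ l, a v = 0 := by
  induction l with
  | nil =>
    obtain ⟨v, hv⟩ := exists_ne (0 : V)
    exact ⟨v, hv, by simp⟩
  | cons a l ih =>
    obtain ⟨w, hw0, hw⟩ := ih (fun x hx y hy => hcomm x (by simp [hx]) y (by simp [hy]))
      (fun x hx => hnil x (by simp [hx]))
    obtain ⟨m, hm⟩ := hnil a (by simp)
    have hexists : ∃ j : ℕ, (a ^ j) w ≠ 0 ∧ (a ^ (j + 1)) w = 0 := by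
      by_contra hcon
      push_neg at hcon
      have : ∀ j : ℕ, (a ^ j) w ≠ 0 := by
        intro j
        induction j with
        | zero => simpa using hw0
        | succ n ihn => exact hcon n ihn
      exact this m (by rw [hm]; simp)
    obtain ⟨j, hj0, hj1⟩ := hexists
    refine ⟨(a ^ j) w, hj0, ?_⟩
    intro b hb
    rcases List.mem_cons.mp hb with rfl | hb
    · rw [← Module.End.mul_apply, ← pow_succ']
      exact hj1
    · have hc : Commute a b := hcomm a (by simp) b (by simp [hb])
      rw [← Module.End.mul_apply, ← (hc.pow_left j).eq, Module.End.mul_apply, hw b hb, map_zero]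

/-- The basic commutator identity `N ^ (j+1) * x = x * N ^ (j+1) + (j+1) • (m * N ^ j)`
when `[N, x] = m` and `m` commutes with `N`. -/
lemma aux_pow_comm {K V : Type*} [Field K] [AddCommGroup V] [Module K V]
    (N x m : Module.End K V) (hNx : N * x = x * N + m) (hNm : N * m = m * N) (j : ℕ) :
    N ^ (j + 1) * x = x * N ^ (j + 1) + (j + 1) • (m * N ^ j) := by
  induction j with
  | zero => simpa using hNx
  | succ n ih =>
    calc N ^ (n + 2) * x = N * (N ^ (n + 1) * x) := by rw [← mul_assoc, ← pow_succ']
      _ = N * x * N ^ (n + 1) + (n + 1) • (N * m * N ^ n) := by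
          rw [ih, mul_add, mul_smul_comm, mul_assoc, mul_assoc]
      _ = (x * N + m) * N ^ (n + 1) + (n + 1) • (m * N ^ (n + 1)) := by
          rw [hNx, hNm, mul_assoc, ← pow_succ']
      _ = x * N ^ (n + 2) + (n + 2) • (m * N ^ (n + 1)) := by
          rw [add_mul, mul_assoc, ← pow_succ' N (n + 1),
            succ_nsmul (m * N ^ (n + 1)) (n + 1), add_assoc,
            add_comm (m * N ^ (n + 1)) ((n + 1) • (m * N ^ (n + 1)))]

/-- Stage 1: every element of the abelian ideal is a scalar plus a nilpotent. -/
lemma aux_stage1 {K V : Type*} [Field K] [IsAlgClosed K]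
    [AddCommGroup V] [Module K V] [FiniteDimensional K V] [Nontrivial V]
    (g h : LieSubalgebra K (Module.End K V))
    (hirr : ∀ W : Submodule K V, (∀ f ∈ g, ∀ v ∈ W, f v ∈ W) → W = ⊥ ∨ W = ⊤)
    (hideal : ∀ a ∈ g, ∀ b ∈ h, ⁅a, b⁆ ∈ h)
    (habelian : ∀ a ∈ h, ∀ b ∈ h, ⁅a, b⁆ = (0 : Module.End K V)) :
    ∀ b ∈ h, ∃ c : K, IsNilpotent (b - c • (1 : Module.End K V)) ∧
      LinearMap.trace K V b = c * (finrank K V : K) := by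
  intro b hb
  obtain ⟨c, hc⟩ := Module.End.exists_eigenvalue b
  set N : Module.End K V := b - c • 1 with hN
  set W : Submodule K V := b.maxGenEigenspace c with hWdef
  have hWinv : ∀ f ∈ g, ∀ v ∈ W, f v ∈ W := by
    intro x hx v hv
    rw [hWdef, Module.End.mem_maxGenEigenspace] at hv ⊢
    obtain ⟨k, hk⟩ := hv
    rw [← hN] at hk
    set m : Module.End K V := b * x - x * b with hm
    have hmh : m ∈ h := by
      have : ⁅x, b⁆ ∈ h := hideal x hx b hb
      have h2 : -⁅x, b⁆ ∈ h := neg_mem this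
      simpa [hm, Ring.lie_def, neg_sub] using h2
    have hbm : b * m = m * b := by
      have := habelian b hb m hmh
      rw [Ring.lie_def, sub_eq_zero] at this
      exact this
    have hNx : N * x = x * N + m := by
      simp only [hN, hm, sub_mul, mul_sub, smul_mul_assoc, mul_smul_comm, one_mul, mul_one]
      abel
    have hNm : N * m = m * N := by
      simp only [hN, sub_mul, mul_sub, smul_mul_assoc, mul_smul_comm, one_mul, mul_one, hbm]
    refine ⟨2 * k + 1, ?_⟩
    have hid := aux_pow_comm N x m hNx hNm (2 * k)
    have h2k : (N ^ (2 * k)) v = 0 := by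
      have : (2 : ℕ) * k = k + k := by ring
      rw [this, pow_add, Module.End.mul_apply, hk, map_zero]
    have h2k1 : (N ^ (2 * k + 1)) v = 0 := by
      rw [pow_succ', Module.End.mul_apply, h2k, map_zero]
    calc (N ^ (2 * k + 1)) (x v) = (N ^ (2 * k + 1) * x) v := rfl
      _ = (x * N ^ (2 * k + 1) + (2 * k + 1) • (m * N ^ (2 * k))) v := by rw [hid]
      _ = x ((N ^ (2 * k + 1)) v) + (2 * k + 1) • m ((N ^ (2 * k)) v) := by
          simp only [LinearMap.add_apply, LinearMap.smul_apply, Module.End.mul_apply]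
      _ = 0 := by rw [h2k, h2k1]; simp
  have hWne : W ≠ ⊥ := by
    intro hbot
    obtain ⟨v, hv⟩ := hc.exists_hasEigenvector
    have hvW : v ∈ W := by
      rw [hWdef, Module.End.mem_maxGenEigenspace]
      refine ⟨1, ?_⟩
      rw [pow_one]
      simp [LinearMap.sub_apply, hv.apply_eq_smul]
    rw [hbot] at hvW
    exact hv.2 (Submodule.mem_bot K |>.mp hvW)
  have hWtop : W = ⊤ := (hirr W hWinv).resolve_left hWne
  have hnil : IsNilpotent N := by
    refine ⟨finrank K V, ?_⟩
    ext v
    have hv : v ∈ W := hWtop ▸ Submodule.mem_top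
    rw [hWdef, Module.End.maxGenEigenspace_eq_genEigenspace_finrank,
      Module.End.mem_genEigenspace_nat] at hv
    simpa using hv
  refine ⟨c, hnil, ?_⟩
  have htr : LinearMap.trace K V N = 0 :=
    (LinearMap.isNilpotent_trace_of_isNilpotent hnil).eq_zero
  have : LinearMap.trace K V N = LinearMap.trace K V b - c * (finrank K V : K) := by
    rw [hN, map_sub, map_smul, LinearMap.trace_one, smul_eq_mul]
  rw [this] at htr
  exact sub_eq_zero.mp htr

/-- If a Lie subalgebra `𝔤 ⊆ gl(V)` acts irreducibly on a finite-dimensional vector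
space `V` over an algebraically closed field of characteristic zero, then every element
of an abelian ideal `𝔥` of `𝔤` acts on `V` as a scalar. -/
theorem stmt_4 {K V : Type*} [Field K] [IsAlgClosed K] [CharZero K]
    [AddCommGroup V] [Module K V] [FiniteDimensional K V]
    (g h : LieSubalgebra K (Module.End K V))
    (hirr : ∀ W : Submodule K V, (∀ f ∈ g, ∀ v ∈ W, f v ∈ W) → W = ⊥ ∨ W = ⊤)
    (hle : h ≤ g)
    (hideal : ∀ a ∈ g, ∀ b ∈ h, ⁅a, b⁆ ∈ h)
    (habelian : ∀ a ∈ h, ∀ b ∈ h, ⁅a, b⁆ = (0 : Module.End K V)) :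
    ∀ a ∈ h, ∃ c : K, a = c • (1 : Module.End K V) := by
  intro a ha
  rcases subsingleton_or_nontrivial V with hV | hV
  · haveI : Subsingleton (Module.End K V) :=
      ⟨fun f g => LinearMap.ext fun v => Subsingleton.elim _ _⟩
    exact ⟨0, Subsingleton.elim _ _⟩
  · set n : K := (finrank K V : K) with hn
    have hn0 : n ≠ 0 := by
      have : 0 < finrank K V := Module.finrank_pos
      exact_mod_cast Nat.cast_ne_zero.mpr this.ne'
    -- the scalar associated to each element of h
    set lam : Module.End K V → K := fun b => n⁻¹ * LinearMap.trace K V b with hlam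
    have key : ∀ b ∈ h, IsNilpotent (b - lam b • (1 : Module.End K V)) := by
      intro b hb
      obtain ⟨c, hcnil, hctr⟩ := aux_stage1 g h hirr hideal habelian b hb
      have : lam b = c := by
        rw [hlam]
        field_simp [hctr]
        rw [hctr, hn, mul_comm]
      rwa [this]
    -- trace of a commutator vanishes, so lam vanishes on commutators
    have lam_comm : ∀ x b : Module.End K V, lam (b * x - x * b) = 0 := by
      intro x b
      rw [hlam]
      have hmc := LinearMap.trace_mul_comm K b x
      simp only [map_sub, hmc, sub_self, mul_zero]
    -- U : common true eigenspace
    set U : Submodule K V :=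
      ⨅ (b : Module.End K V) (_ : b ∈ h), LinearMap.ker (b - lam b • 1) with hU
    have hmemU : ∀ v : V, v ∈ U ↔ ∀ b ∈ h, b v = lam b • v := by
      intro v
      simp only [hU, Submodule.mem_iInf, LinearMap.mem_ker, LinearMap.sub_apply,
        LinearMap.smul_apply, Module.End.one_apply, sub_eq_zero]
    -- U is nonzero : take a finite spanning set of h and use aux_common_kernel
    have hUne : U ≠ ⊥ := by
      obtain ⟨s, hs⟩ := (IsNoetherian.noetherian h.toSubmodule : h.toSubmodule.FG)
      have hsh : ∀ b ∈ s, b ∈ h := by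
        intro b hbs
        have : (b : Module.End K V) ∈ h.toSubmodule := hs ▸ Submodule.subset_span hbs
        exact this
      set l : List (Module.End K V) := s.toList.map (fun b => b - lam b • 1) with hl
      have hcommute : ∀ p ∈ l, ∀ q ∈ l, Commute p q := by
        intro p hp q hq
        rw [hl, List.mem_map] at hp hq
        obtain ⟨b1, hb1, rfl⟩ := hp
        obtain ⟨b2, hb2, rfl⟩ := hq
        have hb1h := hsh b1 (Finset.mem_toList.mp hb1)
        have hb2h := hsh b2 (Finset.mem_toList.mp hb2)
        have hc : Commute b1 b2 := by
          have := habelian b1 hb1h b2 hb2h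
          rw [Ring.lie_def, sub_eq_zero] at this
          exact this
        exact (hc.sub_left (Commute.smul_left (Commute.one_left b2) _)).sub_right
          (Commute.smul_right ((Commute.one_right _)) _)
      have hnilp : ∀ p ∈ l, IsNilpotent p := by
        intro p hp
        rw [hl, List.mem_map] at hp
        obtain ⟨b1, hb1, rfl⟩ := hp
        exact key b1 (hsh b1 (Finset.mem_toList.mp hb1))
      obtain ⟨v, hv0, hv⟩ := aux_common_kernel l hcommute hnilp
      -- v kills N_b for all b ∈ h by linearity
      have hvall : ∀ b ∈ h, b v = lam b • v := by
        intro b hb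
        -- the map b ↦ b v - lam b • v is linear in b
        set φ : Module.End K V →ₗ[K] V :=
          { toFun := fun b => b v - lam b • v
            map_add' := by
              intro p q
              simp [hlam, mul_add, add_smul]
              abel
            map_smul' := by
              intro t p
              simp [hlam, smul_smul, smul_sub, mul_left_comm] } with hφ
        have hsker : ∀ b ∈ (s : Set (Module.End K V)), b ∈ LinearMap.ker φ := by
          intro b hbs
          have := hv (b - lam b • 1) (by
            rw [hl, List.mem_map]
            exact ⟨b, Finset.mem_toList.mpr hbs, rfl⟩)
          simp only [LinearMap.sub_apply, LinearMap.smul_apply, Module.End.one_apply] at this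
          simp [hφ, LinearMap.mem_ker, sub_eq_zero]
          rw [← sub_eq_zero]
          simpa using this
        have hspan : h.toSubmodule ≤ LinearMap.ker φ := by
          rw [← hs]
          exact Submodule.span_le.mpr hsker
        have : φ b = 0 := hspan hb
        simpa [hφ, sub_eq_zero] using this
      rw [Submodule.ne_bot_iff]
      exact ⟨v, (hmemU v).mpr hvall, hv0⟩
    -- U is g-invariant
    have hUinv : ∀ f ∈ g, ∀ v ∈ U, f v ∈ U := by
      intro x hx v hv
      rw [hmemU] at hv ⊢
      intro b hb
      set m : Module.End K V := b * x - x * b with hm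
      have hmh : m ∈ h := by
        have : ⁅x, b⁆ ∈ h := hideal x hx b hb
        have h2 : -⁅x, b⁆ ∈ h := neg_mem this
        simpa [hm, Ring.lie_def, neg_sub] using h2
      have hmv : m v = 0 := by
        have := hv m hmh
        rw [lam_comm x b] at this
        simpa [hm] using this
      have : b (x v) = x (b v) + m v := by
        simp [hm, LinearMap.sub_apply, Module.End.mul_apply]
      rw [this, hmv, add_zero, hv b hb, map_smul]
    have hUtop : U = ⊤ := (hirr U hUinv).resolve_left hUne
    refine ⟨lam a, ?_⟩
    ext v
    have hv : v ∈ U := hUtop ▸ Submodule.mem_top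
    rw [hmemU] at hv
    simpa using hv a ha
end

section
/- Let V be a finite-dimensional vector space over a field K, let σ be a ring automorphism of a commutative K-algebra A acting K-linearly on V via an algebra homomorphism A → End_K(V), and let ψ : V → V be a K-linear map satisfying ψ∘(action of a^σ) = (action of a)∘ψ for all a ∈ A. If there exist a_1,…,a_r, b_1,…,b_r ∈ A with Σ_i (a_i^σ - a_i) b_i = 1, then Trace(ψ) = 0. -/
open Finset in
/-- If `ψ` is a `σ`-twisted (Dwork) operator on a finite-dimensional `K`-vector space `V`
which is a module over a commutative `K`-algebra `A` (via `ρ`), and the ideal generated by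
the elements `aᶿ - a` is the unit ideal, then `Trace(ψ) = 0`. -/
theorem stmt_8 {K V A : Type*} [Field K] [AddCommGroup V] [Module K V]
    [FiniteDimensional K V] [CommRing A] [Algebra K A]
    (σ : A ≃+* A) (ρ : A →ₐ[K] Module.End K V) (ψ : V →ₗ[K] V)
    (hψ : ∀ a : A, ψ ∘ₗ (ρ (σ a) : V →ₗ[K] V) = (ρ a : V →ₗ[K] V) ∘ₗ ψ)
    (r : ℕ) (a b : Fin r → A)
    (hunit : ∑ i : Fin r, (σ (a i) - a i) * b i = 1) :
    LinearMap.trace K V ψ = 0 := by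
  have h1 : LinearMap.trace K V ψ = LinearMap.trace K V (ρ 1 * ψ) := by simp
  rw [h1, ← hunit, map_sum, Finset.sum_mul, map_sum]
  refine Finset.sum_eq_zero fun i _ => ?_
  have key : ψ * ρ (σ (a i)) = ρ (a i) * ψ := hψ (a i)
  have e : ρ ((σ (a i) - a i) * b i) * ψ
      = ρ (σ (a i)) * (ρ (b i) * ψ) - ρ (a i) * (ρ (b i) * ψ) := by
    rw [map_mul ρ, map_sub ρ]; noncomm_ring
  have e2 : LinearMap.trace K V (ρ (σ (a i)) * (ρ (b i) * ψ))
      = LinearMap.trace K V (ρ (a i) * (ρ (b i) * ψ)) := by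
    rw [LinearMap.trace_mul_comm, mul_assoc, key, ← mul_assoc, ← map_mul ρ,
      mul_comm (b i) (a i), map_mul ρ, mul_assoc]
  rw [e, map_sub, e2, sub_self]
end
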